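/- arXiv:0809.3097 — 2 statements merged into one kernel-verified Lean document; each statement's English description precedes it below -/
import Mathlib

section
/- Ordering of subcubes preserving accretivity. Let μ be a Borel measure on ℝ^N which is finite on cubes, let Q ⊆ ℝ^N be an axis-parallel cube, and let b be a μ-integrable complex-valued function on Q with |∫_Q b dμ| ≥ δ μ(Q) for some δ > 0. Then the 2^N dyadic children of Q (the cubes obtained by bisecting each side of Q) can be enumerated Q_1, …, Q_{2^N} in such a way that |∫_{∪_{u=k}^{2^N} Q_u} b dμ| ≥ (1 − (k−1)2^{−N}) δ μ(Q) for every k = 1, …, 2^N. -/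
/-!
Put `V = ∫_Q b` and enumerate the children so that `Re ⟪V, ∫_{Q_u} b⟫` increases
with `u`. These numbers sum to `‖V‖²`, so by monotonicity the tail `u ≥ k` carries at
least the share `(1 - k 2^{-N}) ‖V‖²`. The tail sum is
`Re ⟪V, ∫_{tail} b⟫ ≤ ‖V‖ ‖∫_{tail} b‖`, whence
`‖∫_{tail} b‖ ≥ (1 - k 2^{-N}) ‖V‖ ≥ (1 - k 2^{-N}) δ μ(Q)`.
-/

open MeasureTheory ENNReal

noncomputable section

/-- Euclidean space `ℝ^N`. -/
abbrev RN (N : ℕ) := EuclideanSpace ℝ (Fin N)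

/-- The axis-parallel (half-open) cube with centre `c` and side-length `l`. -/
def cube {N : ℕ} (c : RN N) (l : ℝ) : Set (RN N) :=
  {x | ∀ i, c i - l / 2 ≤ x i ∧ x i < c i + l / 2}

/-- The dyadic child of the cube with centre `c` and side-length `l` selected by
`s : Fin N → Bool` (upper or lower half in each coordinate). -/
def childCube {N : ℕ} (c : RN N) (l : ℝ) (s : Fin N → Bool) : Set (RN N) :=
  cube (WithLp.toLp 2 (fun i => c i + (if s i then l / 4 else -(l / 4)) : Fin N → ℝ)) (l / 2)

section Enumeration

open Finset RealInnerProductSpace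

theorem Monotone.sub_mul_sum_le_mul_sum_Ici {n : ℕ} {g : Fin n → ℝ} (hg : Monotone g)
    (k : Fin n) : ((n : ℝ) - k) * ∑ u, g u ≤ n * ∑ u ∈ Ici k, g u := by
  have hsplit : ∑ u, g u = ∑ u ∈ Iio k, g u + ∑ u ∈ Ici k, g u := by
    rw [← sum_filter_add_sum_filter_not univ (· < k)]
    simp only [filter_gt_eq_Iio, not_lt, filter_le_eq_Ici]
  have hhead : ∑ u ∈ Iio k, g u ≤ k * g k := by
    simpa using sum_le_card_nsmul (Iio k) g (g k) fun u hu => hg (mem_Iio.1 hu).le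
  have htail : ((n : ℝ) - k) * g k ≤ ∑ u ∈ Ici k, g u := by
    have := card_nsmul_le_sum (Ici k) g (g k) fun u hu => hg (mem_Ici.1 hu)
    rwa [Fin.card_Ici, nsmul_eq_mul, Nat.cast_sub k.isLt.le] at this
  have hk : ((k : ℕ) : ℝ) ≤ n := by exact_mod_cast k.isLt.le
  rw [hsplit]
  nlinarith [mul_le_mul_of_nonneg_left hhead (sub_nonneg.2 hk),
    mul_le_mul_of_nonneg_left htail (Nat.cast_nonneg (k : ℕ))]

theorem Fintype.exists_equiv_fin_monotone_comp {α β : Type*} [Fintype α] [LinearOrder β]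
    {n : ℕ} (hn : Fintype.card α = n) (g : α → β) : ∃ e : Fin n ≃ α, Monotone (g ∘ e) :=
  let e₀ := (Fintype.equivFinOfCardEq hn).symm
  ⟨(Tuple.sort (g ∘ e₀)).trans e₀, Tuple.monotone_sort (g ∘ e₀)⟩

theorem exists_equiv_fin_norm_sum_Ici_ge {E α : Type*} [NormedAddCommGroup E]
    [InnerProductSpace ℝ E] [Fintype α] {n : ℕ} (hn : Fintype.card α = n) (z : α → E) :
    ∃ e : Fin n ≃ α, ∀ k : Fin n,
      (1 - k / n : ℝ) * ‖∑ s, z s‖ ≤ ‖∑ u ∈ Ici k, z (e u)‖ := by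
  set V := ∑ s, z s
  obtain ⟨e, he⟩ := Fintype.exists_equiv_fin_monotone_comp hn fun s => ⟪V, z s⟫
  refine ⟨e, fun k => ?_⟩
  set T := ∑ u ∈ Ici k, z (e u)
  have htotal : ∑ u, ⟪V, z (e u)⟫ = ‖V‖ ^ 2 := by
    rw [e.sum_comp (fun s => ⟪V, z s⟫), ← inner_sum, real_inner_self_eq_norm_sq]
  have htail : ∑ u ∈ Ici k, ⟪V, z (e u)⟫ ≤ ‖V‖ * ‖T‖ := by
    rw [← inner_sum]
    exact real_inner_le_norm V T
  have hshare : ((n : ℝ) - k) * ‖V‖ ^ 2 ≤ n * (‖V‖ * ‖T‖) := by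
    rw [← htotal]
    exact (he.sub_mul_sum_le_mul_sum_Ici k).trans
      (mul_le_mul_of_nonneg_left htail (Nat.cast_nonneg n))
  have hn₀ : (0 : ℝ) < n := by exact_mod_cast k.pos
  rw [one_sub_div hn₀.ne', div_mul_eq_mul_div, div_le_iff₀ hn₀]
  rcases (norm_nonneg V).eq_or_lt with hV | hV
  · rw [← hV, mul_zero]
    positivity
  · nlinarith

end Enumeration

section Cubes

variable {N : ℕ} {c : RN N} {l : ℝ}

theorem measurableSet_cube (c : RN N) (l : ℝ) : MeasurableSet (cube c l) := by
  have h : cube c l = ⋂ i, (fun x : RN N => x i) ⁻¹' Set.Ico (c i - l / 2) (c i + l / 2) := by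
    ext x
    simp [cube]
  rw [h]
  exact .iInter fun i =>
    (measurable_pi_apply i).comp (WithLp.measurable_ofLp 2 _) measurableSet_Ico

theorem mem_childCube {s : Fin N → Bool} {x : RN N} :
    x ∈ childCube c l s ↔ ∀ i, if s i then c i ≤ x i ∧ x i < c i + l / 2
      else c i - l / 2 ≤ x i ∧ x i < c i := by
  simp only [childCube, cube, Set.mem_ofPred_eq]
  refine forall_congr' fun i => ?_
  cases s i <;> simp only [Bool.false_eq_true, ↓reduceIte] <;>
    constructor <;> (intro h; exact ⟨by linarith [h.1], by linarith [h.2]⟩)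

theorem childCube_subset_cube (s : Fin N → Bool) : childCube c l s ⊆ cube c l := by
  intro x hx i
  have h := mem_childCube.1 hx i
  split_ifs at h <;> exact ⟨by linarith [h.1], by linarith [h.2]⟩

theorem pairwise_disjoint_childCube : Pairwise (Function.onFun Disjoint (childCube c l)) := by
  intro s t hst
  rw [Function.onFun, Set.disjoint_left]
  intro x hs ht
  obtain ⟨i, hi⟩ := Function.ne_iff.1 hst
  have h₁ := mem_childCube.1 hs i
  have h₂ := mem_childCube.1 ht i
  cases hs : s i <;> cases ht : t i <;>
    simp only [hs, ht, ne_eq, not_true_eq_false, Bool.false_eq_true, ↓reduceIte] at hi h₁ h₂ <;>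
    linarith [h₁.1, h₁.2, h₂.1, h₂.2]

theorem iUnion_childCube : ⋃ s, childCube c l s = cube c l := by
  refine (Set.iUnion_subset childCube_subset_cube).antisymm fun x hx => ?_
  refine Set.mem_iUnion.2 ⟨fun i => decide (c i ≤ x i), mem_childCube.2 fun i => ?_⟩
  by_cases hc : c i ≤ x i
  · simp only [decide_eq_true hc, ↓reduceIte]
    exact ⟨hc, (hx i).2⟩
  · simp only [hc, decide_false, Bool.false_eq_true, ↓reduceIte]
    exact ⟨(hx i).1, lt_of_not_ge hc⟩

variable {E : Type*} [NormedAddCommGroup E] [NormedSpace ℝ E] {μ : Measure (RN N)}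
  {b : RN N → E}

theorem integral_cube_eq_sum_childCube (hb : IntegrableOn b (cube c l) μ) :
    ∫ x in cube c l, b x ∂μ = ∑ s, ∫ x in childCube c l s, b x ∂μ := by
  rw [← iUnion_childCube]
  exact integral_iUnion_fintype (fun _ => measurableSet_cube _ _) pairwise_disjoint_childCube
    fun s => hb.mono_set (childCube_subset_cube s)

theorem integral_biUnion_childCube {ι : Type*} {e : ι → Fin N → Bool}
    (he : Function.Injective e) (t : Finset ι) (hb : IntegrableOn b (cube c l) μ) :
    ∫ x in ⋃ u ∈ t, childCube c l (e u), b x ∂μ =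
      ∑ u ∈ t, ∫ x in childCube c l (e u), b x ∂μ :=
  integral_biUnion_finset t (fun _ _ => measurableSet_cube _ _)
    (fun _ _ _ _ huv => pairwise_disjoint_childCube (he.ne huv))
    fun u _ => hb.mono_set (childCube_subset_cube (e u))

end Cubes

/-- The enumeration `e` is zero-based: `e u` is the child `Q_{u+1}`. -/
theorem ordering_of_subcubes_preserving_accretivity_general
    (N : ℕ) (μ : Measure (RN N))
    (c : RN N) (l : ℝ)
    (b : RN N → ℂ) (hb : IntegrableOn b (cube c l) μ)
    (δ : ℝ)
    (hacc : δ * (μ (cube c l)).toReal ≤ ‖∫ x in cube c l, b x ∂μ‖) :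
    ∃ e : Fin (2 ^ N) ≃ (Fin N → Bool),
      ∀ k : Fin (2 ^ N),
        (1 - (k : ℕ) * ((2 : ℝ) ^ N)⁻¹) * δ * (μ (cube c l)).toReal ≤
          ‖∫ x in ⋃ u ∈ {u : Fin (2 ^ N) | k ≤ u}, childCube c l (e u), b x ∂μ‖ := by
  have hcard : Fintype.card (Fin N → Bool) = 2 ^ N := by simp
  obtain ⟨e, he⟩ := exists_equiv_fin_norm_sum_Ici_ge hcard fun s => ∫ x in childCube c l s, b x ∂μ
  refine ⟨e, fun k => ?_⟩
  have htail :
      ⋃ u ∈ {u | k ≤ u}, childCube c l (e u) = ⋃ u ∈ Finset.Ici k, childCube c l (e u) := by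
    simp
  have hcoef : 0 ≤ 1 - (k : ℕ) * ((2 : ℝ) ^ N)⁻¹ := by
    rw [sub_nonneg, ← div_eq_mul_inv, div_le_one (by positivity)]
    exact_mod_cast k.isLt.le
  rw [htail, integral_biUnion_childCube e.injective _ hb, mul_assoc]
  calc (1 - (k : ℕ) * ((2 : ℝ) ^ N)⁻¹) * (δ * (μ (cube c l)).toReal)
      ≤ (1 - (k : ℕ) * ((2 : ℝ) ^ N)⁻¹) * ‖∫ x in cube c l, b x ∂μ‖ :=
        mul_le_mul_of_nonneg_left hacc hcoef
    _ ≤ _ := by simpa [integral_cube_eq_sum_childCube hb, div_eq_mul_inv] using he k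

/-- **Ordering of subcubes preserving accretivity.** The `2^N` dyadic children of a
cube `Q` can be enumerated `Q_1, …, Q_{2^N}` so that
`|∫_{∪_{u=k}^{2^N} Q_u} b dμ| ≥ (1 − (k−1) 2^{−N}) δ μ(Q)` for all `k`. Below, the
enumeration is the bijection `e`, zero-based: `e u` is the `(u+1)`-st child. -/
theorem ordering_of_subcubes_preserving_accretivity
    (N : ℕ) (hN : 0 < N) (μ : Measure (RN N))
    (hμ : ∀ (c : RN N) (l : ℝ), μ (cube c l) < ∞)
    (c : RN N) (l : ℝ) (hl : 0 < l)
    (b : RN N → ℂ) (hb : IntegrableOn b (cube c l) μ)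
    (δ : ℝ) (hδ : 0 < δ)
    (hacc : δ * (μ (cube c l)).toReal ≤ ‖∫ x in cube c l, b x ∂μ‖) :
    ∃ e : Fin (2 ^ N) ≃ (Fin N → Bool),
      ∀ k : Fin (2 ^ N),
        (1 - (k : ℕ) * ((2 : ℝ) ^ N)⁻¹) * δ * (μ (cube c l)).toReal ≤
          ‖∫ x in ⋃ u ∈ {u : Fin (2 ^ N) | k ≤ u}, childCube c l (e u), b x ∂μ‖ :=
  ordering_of_subcubes_preserving_accretivity_general N μ c l b hb δ hacc
end
end

section
/- Matrix coefficient bound for separated cubes. Let μ be a Borel measure on ℝ^N satisfying μ(B(x,r)) ≤ r^d for all balls, let K be a d-dimensional Calderón–Zygmund kernel with exponent α > 0, and let b₁, b₂ be measurable with ‖b₁‖_{L^∞(μ)} ≤ 1 and ‖b₂‖_{L^∞(μ)} ≤ 1. Let Q and R be axis-parallel cubes with ℓ(Q) ≤ ℓ(R) and 0 < ℓ(Q) ≤ dist(Q,R). Let φ ∈ L¹(μ) be supported in Q with ∫ b₁ φ dμ = 0, and let ψ ∈ L¹(μ) be supported in R. Then |∬ ψ(x) b₂(x) K(x,y) b₁(y)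 φ(y) dμ(y) dμ(x)| ≤ C (ℓ(Q)^α / dist(Q,R)^{d+α}) ‖ψ‖_{L¹(μ)} ‖φ‖_{L¹(μ)}, where C depends only on N, d and α. -/
open MeasureTheory ENNReal

noncomputable section

/-- `μ(B(x,r)) ≤ r^d` for all balls. -/
def HasGrowth {N : ℕ} (μ : Measure (RN N)) (d : ℝ) : Prop :=
  ∀ (x : RN N) (r : ℝ), 0 < r → μ (Metric.ball x r) ≤ ENNReal.ofReal (r ^ d)

/-- A `d`-dimensional Calderón–Zygmund kernel with exponent `α`. -/
structure IsCZKernel {N : ℕ} (d α : ℝ) (K : RN N → RN N → ℂ) : Prop where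
  meas : Measurable (Function.uncurry K)
  bound : ∀ x y : RN N, x ≠ y → ‖K x y‖ ≤ dist x y ^ (-d)
  smooth : ∀ x x' y : RN N, 0 < dist x x' → 2 * dist x x' < dist x y →
    ‖K x y - K x' y‖ + ‖K y x - K y x'‖ ≤ dist x x' ^ α / dist x y ^ (d + α)


/-- The (Euclidean) distance between two sets. -/
def sDist {N : ℕ} (s t : Set (RN N)) : ℝ :=
  sInf {r | ∃ x ∈ s, ∃ y ∈ t, r = dist x y}

/-- The distance between points of two sets dominates `sDist`. -/
lemma sDist_le_dist {N : ℕ} {s t : Set (RN N)} {y x : RN N} (hy : y ∈ s) (hx : x ∈ t) :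
    sDist s t ≤ dist y x := by
  apply csInf_le
  · exact ⟨0, by rintro r ⟨a, -, b, -, rfl⟩; exact dist_nonneg⟩
  · exact ⟨y, hy, x, hx, rfl⟩

/-- Points of a cube are within `√N * l / 2` of its centre. -/
lemma dist_center_of_mem_cube {N : ℕ} {c : RN N} {l : ℝ} (hl : 0 ≤ l) {y : RN N}
    (hy : y ∈ cube c l) : dist y c ≤ Real.sqrt N * l / 2 := by
  have h1 : dist y c ≤ Real.sqrt (N * (l / 2) ^ 2) := by
    rw [EuclideanSpace.dist_eq]
    apply Real.sqrt_le_sqrt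
    calc ∑ i, dist (y i) (c i) ^ 2 ≤ ∑ _i : Fin N, (l / 2) ^ 2 := by
          apply Finset.sum_le_sum
          intro i _
          have h := hy i
          have habs : dist (y i) (c i) ≤ l / 2 := by
            rw [Real.dist_eq, abs_le]
            constructor <;> [linarith [h.2]; linarith [h.1]]
          exact pow_le_pow_left₀ dist_nonneg habs 2
      _ = N * (l / 2) ^ 2 := by
          simp [Finset.sum_const, nsmul_eq_mul]
  calc dist y c ≤ Real.sqrt (N * (l / 2) ^ 2) := h1
    _ = Real.sqrt N * (l / 2) := by
        rw [Real.sqrt_mul (by positivity), Real.sqrt_sq (by positivity)]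
    _ = Real.sqrt N * l / 2 := by ring

/-- **Matrix coefficient bound for separated cubes** (NTV Lemma 6.1). -/
theorem matrix_coefficient_bound_separated_cubes
    (N : ℕ) (hN : 0 < N) (d α : ℝ) (hd0 : 0 < d) (hdN : d ≤ N) (hα : 0 < α) :
    ∃ C : ℝ, ∀ (μ : Measure (RN N)) (K : RN N → RN N → ℂ) (b₁ b₂ : RN N → ℂ),
      HasGrowth μ d → IsCZKernel d α K →
      Measurable b₁ → (∀ᵐ x ∂μ, ‖b₁ x‖ ≤ 1) →
      Measurable b₂ → (∀ᵐ x ∂μ, ‖b₂ x‖ ≤ 1) →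
      ∀ (cQ cR : RN N) (lQ lR : ℝ), 0 < lQ → lQ ≤ lR →
        lQ ≤ sDist (cube cQ lQ) (cube cR lR) →
      ∀ φ ψ : RN N → ℂ,
        Integrable φ μ → (∀ x, x ∉ cube cQ lQ → φ x = 0) →
        (∫ x, b₁ x * φ x ∂μ) = 0 →
        Integrable ψ μ → (∀ x, x ∉ cube cR lR → ψ x = 0) →
        ‖∫ x, ψ x * b₂ x * ∫ y, K x y * b₁ y * φ y ∂μ ∂μ‖ ≤
          C * (lQ ^ α / sDist (cube cQ lQ) (cube cR lR) ^ (d + α)) *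
            (∫ x, ‖ψ x‖ ∂μ) * (∫ x, ‖φ x‖ ∂μ) := by
  classical
  refine ⟨Real.sqrt N ^ α, ?_⟩
  intro μ K b₁ b₂ hgrow hK hb₁m hb₁ hb₂m hb₂ cQ cR lQ lR hlQ hlQR hsep
  intro φ ψ hφ hφsupp hcancel hψ hψsupp
  set D := sDist (cube cQ lQ) (cube cR lR) with hDdef
  have hD0 : 0 < D := lt_of_lt_of_le hlQ hsep
  have hsqrtN : (1 : ℝ) ≤ Real.sqrt N := by
    rw [show (1:ℝ) = Real.sqrt 1 by simp]
    exact Real.sqrt_le_sqrt (by exact_mod_cast hN)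
  set F : RN N → ℂ := fun x => ∫ y, K x y * b₁ y * φ y ∂μ with hFdef
  set M : ℝ := Real.sqrt N ^ α * lQ ^ α / D ^ (d + α) * (∫ x, ‖φ x‖ ∂μ) with hMdef
  have hφnn : 0 ≤ ∫ x, ‖φ x‖ ∂μ := integral_nonneg fun x => norm_nonneg _
  have hM0 : 0 ≤ M := by
    apply mul_nonneg _ hφnn
    positivity
  -- key pointwise bound on the inner integral, for x in the cube R
  have hF : ∀ x ∈ cube cR lR, ‖F x‖ ≤ M := by
    intro x hx
    have hKx : Measurable fun y => K x y := hK.meas.comp measurable_prodMk_left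
    have hasm : AEStronglyMeasurable (fun y => K x y * b₁ y * φ y) μ :=
      ((hKx.mul hb₁m).aestronglyMeasurable).mul hφ.1
    have hxyD : ∀ y ∈ cube cQ lQ, D ≤ dist y x := fun y hy => sDist_le_dist hy hx
    have hbd : ∀ᵐ y ∂μ, ‖K x y * b₁ y * φ y‖ ≤ D ^ (-d) * ‖φ y‖ := by
      filter_upwards [hb₁] with y hy1
      by_cases hyQ : y ∈ cube cQ lQ
      · have hxy : D ≤ dist x y := by rw [dist_comm]; exact hxyD y hyQ
        have hne : x ≠ y := by
          intro h; rw [h] at hxy; simp at hxy; linarith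
        have h1 : ‖K x y‖ ≤ D ^ (-d) :=
          le_trans (hK.bound x y hne)
            (Real.rpow_le_rpow_of_nonpos hD0 hxy (by linarith))
        calc ‖K x y * b₁ y * φ y‖ = ‖K x y‖ * ‖b₁ y‖ * ‖φ y‖ := by simp [norm_mul]
          _ ≤ D ^ (-d) * 1 * ‖φ y‖ := by
              apply mul_le_mul _ le_rfl (norm_nonneg _) (by positivity)
              exact mul_le_mul h1 hy1 (norm_nonneg _) (by positivity)
          _ = D ^ (-d) * ‖φ y‖ := by ring
      · simp only [hφsupp y hyQ, mul_zero, norm_zero]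
        positivity
    have hintK : Integrable (fun y => K x y * b₁ y * φ y) μ :=
      Integrable.mono' (hφ.norm.const_mul _) hasm hbd
    by_cases hcase : D ≤ Real.sqrt N * lQ
    · -- no cancellation needed
      have hstep : ‖F x‖ ≤ D ^ (-d) * ∫ y, ‖φ y‖ ∂μ := by
        calc ‖F x‖ ≤ ∫ y, ‖K x y * b₁ y * φ y‖ ∂μ := norm_integral_le_integral_norm _
          _ ≤ ∫ y, D ^ (-d) * ‖φ y‖ ∂μ :=
              integral_mono_of_nonneg (Filter.Eventually.of_forall fun y => norm_nonneg _)
                (hφ.norm.const_mul _) hbd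
          _ = D ^ (-d) * ∫ y, ‖φ y‖ ∂μ := integral_const_mul _ _
      refine hstep.trans ?_
      apply mul_le_mul_of_nonneg_right _ hφnn
      have h1 : D ^ (-d) = D ^ α / D ^ (d + α) := by
        rw [← Real.rpow_sub hD0]; ring_nf
      rw [h1]
      apply div_le_div₀ (by positivity) _ (by positivity) le_rfl
      calc D ^ α ≤ (Real.sqrt N * lQ) ^ α :=
            Real.rpow_le_rpow hD0.le hcase hα.le
        _ = Real.sqrt N ^ α * lQ ^ α := Real.mul_rpow (Real.sqrt_nonneg _) hlQ.le
    · push_neg at hcase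
      -- use the cancellation
      have hintbφ : Integrable (fun y => b₁ y * φ y) μ := by
        apply Integrable.mono' hφ.norm (hb₁m.aestronglyMeasurable.mul hφ.1)
        filter_upwards [hb₁] with y hy1
        calc ‖b₁ y * φ y‖ = ‖b₁ y‖ * ‖φ y‖ := norm_mul _ _
          _ ≤ 1 * ‖φ y‖ := mul_le_mul_of_nonneg_right hy1 (norm_nonneg _)
          _ = ‖φ y‖ := one_mul _
      have hintK' : Integrable (fun y => K x y * (b₁ y * φ y)) μ := by
        simpa [mul_assoc] using hintK
      have hzero : ∫ y, K x cQ * (b₁ y * φ y) ∂μ = 0 := by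
        rw [integral_const_mul]
        simp [hcancel]
      have hF_eq : F x = ∫ y, (K x y - K x cQ) * (b₁ y * φ y) ∂μ := by
        rw [show (fun y => (K x y - K x cQ) * (b₁ y * φ y)) =
            fun y => K x y * (b₁ y * φ y) - K x cQ * (b₁ y * φ y) from funext fun y => by ring]
        rw [integral_sub hintK' (hintbφ.const_mul _), hzero, sub_zero, hFdef]
        simp [mul_assoc]
      have hbd2 : ∀ᵐ y ∂μ, ‖(K x y - K x cQ) * (b₁ y * φ y)‖ ≤
          Real.sqrt N ^ α * lQ ^ α / D ^ (d + α) * ‖φ y‖ := by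
        filter_upwards [hb₁] with y hy1
        by_cases hyQ : y ∈ cube cQ lQ
        · by_cases hyc : y = cQ
          · simp only [hyc, sub_self, zero_mul, norm_zero]
            positivity
          · have h0 : 0 < dist y cQ := dist_pos.mpr hyc
            have hdc : dist y cQ ≤ Real.sqrt N * lQ / 2 :=
              dist_center_of_mem_cube hlQ.le hyQ
            have hyx : D ≤ dist y x := hxyD y hyQ
            have h2 : 2 * dist y cQ < dist y x := by linarith
            have hs := hK.smooth y cQ x h0 h2
            have h3 : ‖K x y - K x cQ‖ ≤ dist y cQ ^ α / dist y x ^ (d + α) :=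
              le_trans (le_add_of_nonneg_left (norm_nonneg _)) hs
            have h4 : dist y cQ ^ α / dist y x ^ (d + α) ≤
                Real.sqrt N ^ α * lQ ^ α / D ^ (d + α) := by
              apply div_le_div₀ (by positivity) _ (by positivity)
                (Real.rpow_le_rpow hD0.le hyx (by linarith))
              calc dist y cQ ^ α ≤ (Real.sqrt N * lQ) ^ α := by
                    apply Real.rpow_le_rpow dist_nonneg _ hα.le
                    nlinarith
                _ = Real.sqrt N ^ α * lQ ^ α :=
                    Real.mul_rpow (Real.sqrt_nonneg _) hlQ.le
            calc ‖(K x y - K x cQ) * (b₁ y * φ y)‖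
                = ‖K x y - K x cQ‖ * ‖b₁ y‖ * ‖φ y‖ := by
                  simp [norm_mul, mul_assoc]
              _ ≤ (Real.sqrt N ^ α * lQ ^ α / D ^ (d + α)) * 1 * ‖φ y‖ := by
                  apply mul_le_mul _ le_rfl (norm_nonneg _) (by positivity)
                  exact mul_le_mul (h3.trans h4) hy1 (norm_nonneg _) (by positivity)
              _ = Real.sqrt N ^ α * lQ ^ α / D ^ (d + α) * ‖φ y‖ := by ring
        · simp only [hφsupp y hyQ, mul_zero, norm_zero]
          positivity
      calc ‖F x‖ = ‖∫ y, (K x y - K x cQ) * (b₁ y * φ y) ∂μ‖ := by rw [hF_eq]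
        _ ≤ ∫ y, ‖(K x y - K x cQ) * (b₁ y * φ y)‖ ∂μ := norm_integral_le_integral_norm _
        _ ≤ ∫ y, Real.sqrt N ^ α * lQ ^ α / D ^ (d + α) * ‖φ y‖ ∂μ :=
            integral_mono_of_nonneg (Filter.Eventually.of_forall fun y => norm_nonneg _)
              (hφ.norm.const_mul _) hbd2
        _ = M := by rw [integral_const_mul, hMdef]
  -- conclude
  have houter : ‖∫ x, ψ x * b₂ x * F x ∂μ‖ ≤ M * ∫ x, ‖ψ x‖ ∂μ := by
    calc ‖∫ x, ψ x * b₂ x * F x ∂μ‖ ≤ ∫ x, ‖ψ x * b₂ x * F x‖ ∂μ :=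
        norm_integral_le_integral_norm _
      _ ≤ ∫ x, M * ‖ψ x‖ ∂μ := by
          apply integral_mono_of_nonneg (Filter.Eventually.of_forall fun x => norm_nonneg _)
            (hψ.norm.const_mul M)
          filter_upwards [hb₂] with x hx2
          by_cases hxR : x ∈ cube cR lR
          · calc ‖ψ x * b₂ x * F x‖ = ‖ψ x‖ * ‖b₂ x‖ * ‖F x‖ := by simp [norm_mul]
              _ ≤ ‖ψ x‖ * 1 * M := by
                  apply mul_le_mul _ (hF x hxR) (norm_nonneg _) (by positivity)
                  exact mul_le_mul_of_nonneg_left hx2 (norm_nonneg _)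
              _ = M * ‖ψ x‖ := by ring
          · simp only [hψsupp x hxR, zero_mul, norm_zero]
            positivity
      _ = M * ∫ x, ‖ψ x‖ ∂μ := integral_const_mul _ _
  refine houter.trans (le_of_eq ?_)
  rw [hMdef]
  ring
end
end
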